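/- Let y = (y_α) be a truncated pseudo-moment sequence on ℝⁿ indexed by multi-indices of degree at most 2d with y_0 = 1, such that the moment matrix M_d(y) is positive semidefinite and y_{2d·e_i} ≤ R^{2d} for each coordinate direction e_i and some R ≥ 1. Then |y_α| ≤ R^{2d} for all α with |α| ≤ 2d. -/

import Mathlib

/-- The (truncated) moment matrix of order `d` of a pseudo-moment sequence `y` is
positive semidefinite: every quadratic form built from coefficient vectors supported on
multi-indices of degree at most `d` is nonnegative. -/
def MomMatPSD (n : ℕ) (y : (Fin n → ℕ) → ℝ) (d : ℕ) : Prop :=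
  ∀ c : (Fin n → ℕ) →₀ ℝ, (∀ α ∈ c.support, (∑ i, α i) ≤ d) →
    0 ≤ ∑ α ∈ c.support, ∑ β ∈ c.support, c α * c β * y (α + β)

/-!
Cauchy–Schwarz for the positive semidefinite form gives `y (β + γ) ^ 2 ≤ y (β + β) * y (γ + γ)`,
and every `α` of degree at most `2 d` splits as `β + γ` with both summands of degree at most `d`;
so it suffices to bound the diagonal entries `y (β + β)`. By the same inequality
`β ↦ y (β + β)` is midpoint log-convex on the lattice simplex `{β | ∑ i, β i ≤ d}`, hence it
attains its maximum at a vertex `0` or `d • e i`, where it equals `y 0` or `y (2 d • e i)`.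
-/

open Finset

lemma exists_le_sum_eq {n : ℕ} (α : Fin n → ℕ) {m : ℕ} (hm : m ≤ ∑ i, α i) :
    ∃ β ≤ α, ∑ i, β i = m := by
  induction m with
  | zero => exact ⟨0, fun _ => Nat.zero_le _, by simp⟩
  | succ m ih =>
    obtain ⟨β, hβα, hβ⟩ := ih (by omega)
    obtain ⟨i, hi⟩ : ∃ i, β i < α i := by
      by_contra! h
      have := Finset.sum_le_sum fun i (_ : i ∈ univ) => h i
      omega
    refine ⟨β + Pi.single i 1, fun j => ?_, ?_⟩
    · rcases eq_or_ne j i with rfl | hj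
      · simpa using hi
      · simpa [hj] using hβα j
    · simp [Finset.sum_add_distrib, hβ]

lemma exists_add_eq_of_sum_le_two_mul {n d : ℕ} {α : Fin n → ℕ} (hα : ∑ i, α i ≤ 2 * d) :
    ∃ β γ : Fin n → ℕ, β + γ = α ∧ ∑ i, β i ≤ d ∧ ∑ i, γ i ≤ d := by
  obtain ⟨β, hβα, hβ⟩ := exists_le_sum_eq α (min_le_left (∑ i, α i) d)
  obtain ⟨γ, rfl⟩ := exists_add_of_le hβα
  refine ⟨β, γ, rfl, by omega, ?_⟩
  simp only [Pi.add_apply, Finset.sum_add_distrib] at hα hβ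
  omega

lemma finite_setOf_sum_le (n d : ℕ) : {α : Fin n → ℕ | ∑ i, α i ≤ d}.Finite :=
  (Set.finite_Iic fun _ => d).subset fun _ hα i =>
    (Finset.single_le_sum (fun _ _ => Nat.zero_le _) (Finset.mem_univ i)).trans hα

lemma two_mul_sum_sq_lt_of_add_eq {n : ℕ} {β γ δ : Fin n → ℕ} (h : β + γ = δ + δ)
    (hne : β ≠ γ) : 2 * ∑ i, δ i ^ 2 < ∑ i, β i ^ 2 + ∑ i, γ i ^ 2 := by
  have hi : ∀ i, β i + γ i = δ i + δ i := fun i => congrFun h i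
  obtain ⟨j, hj⟩ := Function.ne_iff.mp hne
  rw [Finset.mul_sum, ← Finset.sum_add_distrib]
  refine Finset.sum_lt_sum (fun i _ => ?_) ⟨j, Finset.mem_univ j, ?_⟩
  · nlinarith [hi i, sq_nonneg ((β i : ℤ) - γ i)]
  · have hsq : 0 < ((β j : ℤ) - γ j) ^ 2 :=
      sq_pos_of_ne_zero (sub_ne_zero.mpr (by exact_mod_cast hj))
    nlinarith [hi j]

lemma exists_eq_single_one_add {n : ℕ} {δ : Fin n → ℕ} {i : Fin n} (hi : δ i ≠ 0) :
    ∃ ρ : Fin n → ℕ, δ = Pi.single i 1 + ρ :=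
  exists_add_of_le fun j => by
    rcases eq_or_ne j i with rfl | hj
    · simpa [Nat.one_le_iff_ne_zero] using hi
    · simp [hj]

lemma eq_zero_or_eq_single_of_forall_add_eq {n d : ℕ} {δ : Fin n → ℕ} (hδ : ∑ i, δ i ≤ d)
    (h : ∀ β γ : Fin n → ℕ, ∑ i, β i ≤ d → ∑ i, γ i ≤ d → β + γ = δ + δ → β = γ) :
    δ = 0 ∨ ∃ i, δ = Pi.single i d := by
  refine or_iff_not_imp_left.mpr fun hδ0 => ?_
  obtain ⟨i, hi⟩ := Function.ne_iff.mp hδ0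
  obtain ⟨ρ, hρ⟩ := exists_eq_single_one_add hi
  have hdeg : ∑ j, δ j = ∑ j, ρ j + 1 := by simp [hρ, Finset.sum_add_distrib, add_comm]
  by_cases hlt : ∑ j, δ j < d
  · have := congrArg (fun α : Fin n → ℕ => ∑ j, α j) <|
      h (δ + Pi.single i 1) ρ (by simpa [Finset.sum_add_distrib] using hlt) (by omega)
        (by rw [hρ]; abel)
    simp [Finset.sum_add_distrib] at this
    omega
  by_cases hj : ∃ j ≠ i, δ j ≠ 0
  · obtain ⟨j, hji, hj⟩ := hj
    obtain ⟨σ, hσ⟩ := exists_eq_single_one_add (i := j) (δ := ρ) (by simpa [hρ, hji] using hj)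
    have := congrFun (h (Pi.single i 1 + Pi.single i 1 + σ) (Pi.single j 1 + Pi.single j 1 + σ)
      (by simp [hρ, hσ, Finset.sum_add_distrib] at hδ ⊢; omega)
      (by simp [hρ, hσ, Finset.sum_add_distrib] at hδ ⊢; omega)
      (by rw [hρ, hσ]; abel)) i
    simp [Ne.symm hji] at this
  push Not at hj
  have hδi : ∑ k, δ k = δ i := Finset.sum_eq_single i (fun k _ hk => hj k hk) (by simp)
  refine ⟨i, funext fun j => ?_⟩
  rcases eq_or_ne j i with rfl | hji
  · simp only [Pi.single_eq_same]
    omega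
  · simp [hji, hj j hji]

namespace MomMatPSD

variable {n d : ℕ} {y : (Fin n → ℕ) → ℝ}

lemma quadratic_nonneg (hpsd : MomMatPSD n y d) {α β : Fin n → ℕ} (hα : ∑ i, α i ≤ d)
    (hβ : ∑ i, β i ≤ d) (s t : ℝ) :
    0 ≤ s * s * y (α + α) + 2 * s * t * y (α + β) + t * t * y (β + β) := by
  set c := Finsupp.single α s + Finsupp.single β t
  have hc : ∀ γ ∈ c.support, ∑ i, γ i ≤ d := fun γ hγ => by
    rcases Finset.mem_union.mp (Finsupp.support_add hγ) with h | h
    · rwa [Finset.mem_singleton.mp (Finsupp.support_single_subset h)]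
    · rwa [Finset.mem_singleton.mp (Finsupp.support_single_subset h)]
  have hlin : ∀ g : (Fin n → ℕ) → ℝ, c.sum (fun γ u => u * g γ) = s * g α + t * g β := by
    intro g
    rw [Finsupp.sum_add_index' (by simp) (fun _ _ _ => add_mul _ _ _),
      Finsupp.sum_single_index (zero_mul _), Finsupp.sum_single_index (zero_mul _)]
  calc 0 ≤ ∑ γ ∈ c.support, ∑ γ' ∈ c.support, c γ * c γ' * y (γ + γ') := hpsd c hc
    _ = c.sum (fun γ u => u * c.sum fun γ' u' => u' * y (γ + γ')) := by
      simp only [Finsupp.sum, Finset.mul_sum, mul_assoc]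
    _ = _ := by
      rw [hlin, hlin, hlin, add_comm β α]
      ring

lemma diag_nonneg (hpsd : MomMatPSD n y d) {α : Fin n → ℕ} (hα : ∑ i, α i ≤ d) :
    0 ≤ y (α + α) := by
  simpa using hpsd.quadratic_nonneg hα hα 1 0

lemma sq_le_mul_diag (hpsd : MomMatPSD n y d) {α β : Fin n → ℕ} (hα : ∑ i, α i ≤ d)
    (hβ : ∑ i, β i ≤ d) : y (α + β) ^ 2 ≤ y (α + α) * y (β + β) := by
  have := discrim_le_zero (a := y (α + α)) (b := 2 * y (α + β)) (c := y (β + β)) fun s => by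
    linarith [hpsd.quadratic_nonneg hα hβ s 1]
  rw [discrim] at this
  nlinarith

/-- Midpoint log-convexity of `α ↦ y (α + α)`, in the form used at a maximum. -/
lemma diag_le_diag_of_add_eq (hpsd : MomMatPSD n y d) {β γ δ : Fin n → ℕ}
    (hβ : ∑ i, β i ≤ d) (hγ : ∑ i, γ i ≤ d) (h : β + γ = δ + δ) (hγδ : y (γ + γ) ≤ y (δ + δ)) :
    y (δ + δ) ≤ y (β + β) := by
  have hcs := hpsd.sq_le_mul_diag hβ hγ
  rw [h] at hcs
  have hδ : 0 ≤ y (δ + δ) := (hpsd.diag_nonneg hγ).trans hγδ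
  nlinarith [hpsd.diag_nonneg hβ]

lemma diag_le (hpsd : MomMatPSD n y d) {T : ℝ} (h0 : y 0 ≤ T)
    (hvert : ∀ i, y (Pi.single i (2 * d)) ≤ T) {α : Fin n → ℕ} (hα : ∑ i, α i ≤ d) :
    y (α + α) ≤ T := by
  -- `δ` maximises `y (δ + δ)` on the simplex, ties broken by the strictly convex `∑ i, δ i ^ 2`;
  -- such a `δ` cannot be the midpoint of two distinct points, so it is a vertex.
  obtain ⟨δ, hδ, hδmax⟩ := Set.exists_max_image {α : Fin n → ℕ | ∑ i, α i ≤ d}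
    (fun α => toLex (y (α + α), ∑ i, α i ^ 2)) (finite_setOf_sum_le n d) ⟨0, by simp⟩
  simp only [Set.mem_ofPred_eq, Prod.Lex.toLex_le_toLex] at hδ hδmax
  have hmax : ∀ γ, ∑ i, γ i ≤ d → y (γ + γ) ≤ y (δ + δ) := fun γ hγ =>
    (hδmax γ hγ).elim le_of_lt fun h => h.1.le
  have htie : ∀ γ, ∑ i, γ i ≤ d → y (δ + δ) ≤ y (γ + γ) →
      ∑ i, γ i ^ 2 ≤ ∑ i, δ i ^ 2 := fun γ hγ hle =>
    (hδmax γ hγ).elim (fun h => absurd hle h.not_ge) fun h => h.2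
  have hext : ∀ β γ : Fin n → ℕ, ∑ i, β i ≤ d → ∑ i, γ i ≤ d → β + γ = δ + δ → β = γ := by
    intro β γ hβ hγ h
    by_contra hne
    have := two_mul_sum_sq_lt_of_add_eq h hne
    have := htie β hβ (hpsd.diag_le_diag_of_add_eq hβ hγ h (hmax γ hγ))
    have := htie γ hγ (hpsd.diag_le_diag_of_add_eq hγ hβ ((add_comm γ β).trans h) (hmax β hβ))
    omega
  refine (hmax α hα).trans ?_
  rcases eq_zero_or_eq_single_of_forall_add_eq hδ hext with rfl | ⟨i, rfl⟩
  · simpa using h0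
  · rw [← Pi.single_add, ← two_mul]
    exact hvert i

lemma abs_le (hpsd : MomMatPSD n y d) {T : ℝ} (h0 : y 0 ≤ T)
    (hvert : ∀ i, y (Pi.single i (2 * d)) ≤ T) {α : Fin n → ℕ} (hα : ∑ i, α i ≤ 2 * d) :
    |y α| ≤ T := by
  obtain ⟨β, γ, rfl, hβ, hγ⟩ := exists_add_eq_of_sum_le_two_mul hα
  have hT : 0 ≤ T := (hpsd.diag_nonneg (α := 0) (by simp)).trans (by simpa using h0)
  refine abs_le_of_sq_le_sq ?_ hT
  calc y (β + γ) ^ 2 ≤ y (β + β) * y (γ + γ) := hpsd.sq_le_mul_diag hβ hγ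
    _ ≤ T * T := mul_le_mul (hpsd.diag_le h0 hvert hβ) (hpsd.diag_le h0 hvert hγ)
        (hpsd.diag_nonneg hγ) hT
    _ = T ^ 2 := (sq T).symm

end MomMatPSD

theorem psd_moment_sequence_bound (n d : ℕ) (R : ℝ) (hR : 1 ≤ R)
    (y : (Fin n → ℕ) → ℝ) (hy0 : y 0 = 1)
    (hdiag : ∀ i : Fin n, y (Pi.single i (2 * d)) ≤ R ^ (2 * d))
    (hpsd : MomMatPSD n y d) :
    ∀ α : Fin n → ℕ, (∑ i, α i) ≤ 2 * d → |y α| ≤ R ^ (2 * d) := fun _ hα =>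
  hpsd.abs_le (hy0.trans_le (one_le_pow₀ hR)) hdiag hα
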